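/- Let (G,B,m,w) be a connected weighted finite graph with nonempty boundary B such that no edge joins two boundary vertices (E(B,B)=∅). Then σ₂ ≥ w₀ / (d_B · V_B), where V_B = Σ_{x∈B} m_x, w₀ = min_{e∈E} w_e, and d_B = max{d(x,y) : x,y ∈ B}. -/

import Mathlib

open Finset

variable {V : Type*}

/-- The Dirichlet energy `⟨du,du⟩ = ∑_{{x,y}∈E} (u y - u x)^2 w_{xy}` of a function `u`,
where the edge weight `w` is symmetric and vanishes on non-adjacent pairs. -/
noncomputable def energy [Fintype V] (w : V → V → ℝ) (u : V → ℝ) : ℝ :=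
  (1 / 2) * ∑ x, ∑ y, (u y - u x) ^ 2 * w x y

/-- The Dirichlet pairing `⟨du,dv⟩ = ∑_{{x,y}∈E} (u y - u x)(v y - v x) w_{xy}`. -/
noncomputable def dirPairing [Fintype V] (w : V → V → ℝ) (u v : V → ℝ) : ℝ :=
  (1 / 2) * ∑ x, ∑ y, (u y - u x) * (v y - v x) * w x y

/-- The weighted graph Laplacian `Δu(x) = (1/m_x) ∑_y (u y - u x) w_{xy}`. -/
noncomputable def glap [Fintype V] (m : V → ℝ) (w : V → V → ℝ) (u : V → ℝ) (x : V) : ℝ :=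
  (1 / m x) * ∑ y, (u y - u x) * w x y

/-- `d_B`, the maximal graph distance between two boundary vertices. -/
noncomputable def boundaryDiam (G : SimpleGraph V) (B : Finset V) : ℕ :=
  (B ×ˢ B).sup fun p => G.dist p.1 p.2

/-- `w₀`, the minimal edge weight. -/
noncomputable def minEdgeWeight (G : SimpleGraph V) (w : V → V → ℝ) : ℝ :=
  sInf {r : ℝ | ∃ x y, G.Adj x y ∧ w x y = r}

/-- `m₀`, the minimal vertex measure on the boundary. -/
noncomputable def minBoundaryMeasure (B : Finset V) (m : V → ℝ) : ℝ :=
  sInf {r : ℝ | ∃ x ∈ B, m x = r}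

/-- The second Steklov eigenvalue `σ₂`, via its variational characterization: the infimum of
the Rayleigh quotients `E(u)/⟨u,u⟩_B` over functions `u` on `V` whose boundary values are
nonzero and have weighted mean zero.  (Since the harmonic extension minimizes the Dirichlet
energy among all extensions of given boundary data, this agrees with the second eigenvalue of
the Steklov operator.) -/
noncomputable def sigma2 [Fintype V] (B : Finset V) (m : V → ℝ) (w : V → V → ℝ) : ℝ :=
  sInf {r : ℝ | ∃ u : V → ℝ, (∃ x ∈ B, u x ≠ 0) ∧ (∑ x ∈ B, u x * m x = 0) ∧
    r = energy w u / ∑ x ∈ B, (u x) ^ 2 * m x}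

/-!
For boundary data `u` of weighted mean zero,
`∑_{x,y ∈ B} (u y - u x)² m_x m_y = 2 V_B ⟨u,u⟩_B`. Telescoping `u` along a shortest path from
`x` to `y` and applying Cauchy–Schwarz bounds each `(u y - u x)² w₀` by
`d(x,y) · ∑_path (du)² w ≤ 2 d_B E(u)`, since a path uses each edge at most once.
Summing against `m_x m_y` gives `w₀ ⟨u,u⟩_B ≤ d_B V_B E(u)`, a lower bound `w₀ / (d_B V_B)` on
every Rayleigh quotient.
-/

section CauchySchwarzAlongWalks

variable {G : SimpleGraph V} {x y : V}

theorem SimpleGraph.Walk.sq_sub_le_length_mul_sum_sq (u : V → ℝ) (p : G.Walk x y) :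
    (u y - u x) ^ 2 ≤
      p.length * ∑ i ∈ range p.length, (u (p.getVert (i + 1)) - u (p.getVert i)) ^ 2 := by
  have htelescope :
      u y - u x = ∑ i ∈ range p.length, (u (p.getVert (i + 1)) - u (p.getVert i)) := by
    rw [sum_range_sub (fun i => u (p.getVert i)), p.getVert_length, p.getVert_zero]
  have hcs := sq_sum_le_card_mul_sum_sq (s := range p.length)
    (f := fun i => u (p.getVert (i + 1)) - u (p.getVert i))
  rwa [card_range, ← htelescope] at hcs

theorem SimpleGraph.Walk.IsPath.sum_getVert_le_sum [Fintype V] {p : G.Walk x y} (hp : p.IsPath)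
    (F : V → V → ℝ) (hF : ∀ a b, 0 ≤ F a b) :
    ∑ i ∈ range p.length, F (p.getVert i) (p.getVert (i + 1)) ≤ ∑ a, ∑ b, F a b := by
  classical
  set step : ℕ → V × V := fun i => (p.getVert i, p.getVert (i + 1))
  have hinj : Set.InjOn step (range p.length) := fun i hi j hj hij =>
    hp.getVert_injOn (by simp at hi ⊢; omega) (by simp at hj ⊢; omega) (Prod.ext_iff.mp hij).1
  calc ∑ i ∈ range p.length, F (p.getVert i) (p.getVert (i + 1))
      = ∑ q ∈ (range p.length).image step, F q.1 q.2 :=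
        (sum_image (f := fun q : V × V => F q.1 q.2) hinj).symm
    _ ≤ ∑ q : V × V, F q.1 q.2 :=
        sum_le_sum_of_subset_of_nonneg (subset_univ _) fun q _ _ => hF q.1 q.2
    _ = ∑ a, ∑ b, F a b := Fintype.sum_prod_type _

end CauchySchwarzAlongWalks

theorem sum_sum_sq_sub_mul_mul {ι R : Type*} [CommRing R] (s : Finset ι) (f g : ι → R) :
    ∑ x ∈ s, ∑ y ∈ s, (f y - f x) ^ 2 * (g x * g y) =
      2 * ((∑ x ∈ s, g x) * ∑ x ∈ s, f x ^ 2 * g x - (∑ x ∈ s, f x * g x) ^ 2) := by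
  have hexpand : ∀ x y, (f y - f x) ^ 2 * (g x * g y) =
      g x * (f y ^ 2 * g y) + f x ^ 2 * g x * g y - 2 * (f x * g x) * (f y * g y) :=
    fun x y => by ring
  simp only [hexpand, sum_add_distrib, sum_sub_distrib, ← mul_sum, ← sum_mul]
  ring

section WeightedGraph

variable {G : SimpleGraph V} {B : Finset V} {m : V → ℝ} {w : V → V → ℝ}

theorem minEdgeWeight_le (hw : ∀ x y, G.Adj x y → 0 ≤ w x y) {x y : V} (h : G.Adj x y) :
    minEdgeWeight G w ≤ w x y :=
  csInf_le ⟨0, by rintro r ⟨a, b, hab, rfl⟩; exact hw a b hab⟩ ⟨x, y, h, rfl⟩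

theorem minEdgeWeight_nonneg (hw : ∀ x y, G.Adj x y → 0 ≤ w x y) : 0 ≤ minEdgeWeight G w :=
  Real.sInf_nonneg <| by rintro r ⟨a, b, hab, rfl⟩; exact hw a b hab

theorem dist_le_boundaryDiam {x y : V} (hx : x ∈ B) (hy : y ∈ B) :
    G.dist x y ≤ boundaryDiam G B := by
  unfold boundaryDiam
  exact Finset.le_sup (f := fun p : V × V => G.dist p.1 p.2) (b := (x, y))
    (mem_product.mpr ⟨hx, hy⟩)

theorem exists_ne_of_boundaryDiam_pos (h : 0 < boundaryDiam G B) :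
    ∃ a ∈ B, ∃ b ∈ B, a ≠ b := by
  unfold boundaryDiam at h
  obtain ⟨⟨a, b⟩, hab, hdist⟩ := Finset.lt_sup_iff.mp h
  obtain ⟨ha, hb⟩ := mem_product.mp hab
  exact ⟨a, ha, b, hb, fun h => by simp [h] at hdist⟩

variable [Fintype V]

theorem energy_nonneg (hw : ∀ x y, 0 ≤ w x y) (u : V → ℝ) : 0 ≤ energy w u := by
  unfold energy
  exact mul_nonneg (by norm_num)
    (sum_nonneg fun x _ => sum_nonneg fun y _ => mul_nonneg (sq_nonneg _) (hw x y))

theorem sq_sub_mul_le_dist_mul_energy (hG : G.Connected) (hw : ∀ x y, 0 ≤ w x y) {w₀ : ℝ}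
    (hw₀ : 0 ≤ w₀) (hw₀_le : ∀ x y, G.Adj x y → w₀ ≤ w x y) (u : V → ℝ) (x y : V) :
    (u y - u x) ^ 2 * w₀ ≤ 2 * G.dist x y * energy w u := by
  obtain ⟨p, hp, hlen⟩ := hG.exists_path_of_dist x y
  set du : ℕ → ℝ := fun i => (u (p.getVert (i + 1)) - u (p.getVert i)) ^ 2
  have hedges : ∑ i ∈ range p.length, du i * w₀ ≤ 2 * energy w u :=
    calc ∑ i ∈ range p.length, du i * w₀
        ≤ ∑ i ∈ range p.length, (u (p.getVert (i + 1)) - u (p.getVert i)) ^ 2 *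
            w (p.getVert i) (p.getVert (i + 1)) :=
          sum_le_sum fun i hi => mul_le_mul_of_nonneg_left
            (hw₀_le _ _ (p.adj_getVert_succ (mem_range.mp hi))) (sq_nonneg _)
      _ ≤ ∑ a, ∑ b, (u b - u a) ^ 2 * w a b :=
          hp.sum_getVert_le_sum (fun a b => (u b - u a) ^ 2 * w a b) fun a b =>
            mul_nonneg (sq_nonneg _) (hw a b)
      _ = 2 * energy w u := by rw [energy]; ring
  calc (u y - u x) ^ 2 * w₀ ≤ p.length * ∑ i ∈ range p.length, du i * w₀ := by
        rw [← sum_mul, ← mul_assoc]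
        exact mul_le_mul_of_nonneg_right (p.sq_sub_le_length_mul_sum_sq u) hw₀
    _ ≤ p.length * (2 * energy w u) := by gcongr
    _ = 2 * G.dist x y * energy w u := by rw [hlen]; ring

theorem mul_sum_sq_le_boundaryDiam_mul_energy (hG : G.Connected) (hm : ∀ x, 0 ≤ m x)
    (hVB : 0 < ∑ x ∈ B, m x) (hw : ∀ x y, 0 ≤ w x y) {w₀ : ℝ} (hw₀ : 0 ≤ w₀)
    (hw₀_le : ∀ x y, G.Adj x y → w₀ ≤ w x y) {u : V → ℝ} (hu : ∑ x ∈ B, u x * m x = 0) :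
    w₀ * ∑ x ∈ B, u x ^ 2 * m x ≤ boundaryDiam G B * (∑ x ∈ B, m x) * energy w u := by
  have hpair : ∀ x ∈ B, ∀ y ∈ B,
      w₀ * ((u y - u x) ^ 2 * (m x * m y)) ≤ 2 * boundaryDiam G B * energy w u * (m x * m y) :=
    fun x hx y hy => by
      rw [← mul_assoc, mul_comm w₀]
      refine mul_le_mul_of_nonneg_right ?_ (mul_nonneg (hm x) (hm y))
      calc (u y - u x) ^ 2 * w₀ ≤ 2 * G.dist x y * energy w u :=
            sq_sub_mul_le_dist_mul_energy hG hw hw₀ hw₀_le u x y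
        _ ≤ 2 * boundaryDiam G B * energy w u := by
            gcongr
            · exact energy_nonneg hw u
            · exact dist_le_boundaryDiam hx hy
  have hsum := sum_le_sum fun x hx => sum_le_sum fun y hy => hpair x hx y hy
  simp only [← mul_sum, ← sum_mul, sum_sum_sq_sub_mul_mul, hu] at hsum
  nlinarith

theorem sigma2_nonneg (hm : ∀ x, 0 ≤ m x) (hw : ∀ x y, 0 ≤ w x y) : 0 ≤ sigma2 B m w :=
  Real.sInf_nonneg <| by
    rintro r ⟨u, -, -, rfl⟩
    exact div_nonneg (energy_nonneg hw u) (sum_nonneg fun x _ => by have := hm x; positivity)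

theorem le_sigma2 (hm : ∀ x, 0 < m x) (hB : ∃ a ∈ B, ∃ b ∈ B, a ≠ b) {c : ℝ}
    (h : ∀ u : V → ℝ, ∑ x ∈ B, u x * m x = 0 → c * ∑ x ∈ B, u x ^ 2 * m x ≤ energy w u) :
    c ≤ sigma2 B m w := by
  classical
  obtain ⟨a, ha, b, hb, hab⟩ := hB
  refine le_csInf ?_ ?_
  · set u : V → ℝ := fun v => if v = a then m b else if v = b then -m a else 0
    refine ⟨_, u, ⟨a, ha, by simp [u, (hm b).ne']⟩, ?_, rfl⟩
    rw [sum_eq_add_of_mem a b ha hb hab fun x _ hx => by simp [u, hx.1, hx.2]]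
    simp only [u, ↓reduceIte, hab.symm, neg_mul]
    ring
  · rintro r ⟨u, ⟨x, hx, hux⟩, hu, rfl⟩
    have hQ : 0 < ∑ x ∈ B, u x ^ 2 * m x :=
      sum_pos' (fun y _ => by have := hm y; positivity) ⟨x, hx, by have := hm x; positivity⟩
    exact (le_div_iff₀ hQ).mpr (h u hu)

end WeightedGraph

theorem perrin_general_lower_bound_general [Fintype V]
    (G : SimpleGraph V) (hG : G.Connected)
    (B : Finset V)
    (m : V → ℝ) (w : V → V → ℝ)
    (hm : ∀ x, 0 < m x)
    (hw_pos : ∀ x y, G.Adj x y → 0 < w x y)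
    (hw_zero : ∀ x y, ¬ G.Adj x y → w x y = 0) :
    sigma2 B m w ≥
      minEdgeWeight G w / ((boundaryDiam G B : ℝ) * ∑ x ∈ B, m x) := by
  have hw : ∀ x y, 0 ≤ w x y := fun x y => by
    by_cases h : G.Adj x y
    exacts [(hw_pos x y h).le, (hw_zero x y h).ge]
  have hw_adj : ∀ x y, G.Adj x y → 0 ≤ w x y := fun x y _ => hw x y
  rcases (boundaryDiam G B).eq_zero_or_pos with hdB | hdB
  · -- the right-hand side is then `w₀ / 0 = 0`
    rw [hdB, Nat.cast_zero, zero_mul, div_zero]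
    exact sigma2_nonneg (fun x => (hm x).le) hw
  obtain ⟨a, ha, b, hb, hab⟩ := exists_ne_of_boundaryDiam_pos hdB
  have hVB : 0 < ∑ x ∈ B, m x := sum_pos (fun x _ => hm x) ⟨a, ha⟩
  refine le_sigma2 hm ⟨a, ha, b, hb, hab⟩ fun u hu => ?_
  rw [div_mul_eq_mul_div, div_le_iff₀ (by positivity), mul_comm (energy w u)]
  exact mul_sum_sq_le_boundaryDiam_mul_energy hG (fun x => (hm x).le) hVB hw
    (minEdgeWeight_nonneg hw_adj) (fun x y => minEdgeWeight_le hw_adj) hu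

/-- **Perrin's general lower bound** (Theorem 1.2).
For a connected weighted finite graph with nonempty boundary `B` and no edge joining two
boundary vertices, one has `σ₂ ≥ w₀ / (d_B · V_B)` where `V_B = ∑_{x∈B} m_x` and
`w₀ = min_{e∈E} w_e`. -/
theorem perrin_general_lower_bound [Fintype V]
    (G : SimpleGraph V) (hG : G.Connected)
    (B : Finset V) (hB : B.Nonempty)
    (hBB : ∀ x ∈ B, ∀ y ∈ B, ¬ G.Adj x y)
    (m : V → ℝ) (w : V → V → ℝ)
    (hm : ∀ x, 0 < m x)
    (hw_symm : ∀ x y, w x y = w y x)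
    (hw_pos : ∀ x y, G.Adj x y → 0 < w x y)
    (hw_zero : ∀ x y, ¬ G.Adj x y → w x y = 0) :
    sigma2 B m w ≥
      minEdgeWeight G w / ((boundaryDiam G B : ℝ) * ∑ x ∈ B, m x) :=
  perrin_general_lower_bound_general G hG B m w hm hw_pos hw_zero
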